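/- arXiv:2207.08939 — 3 statements merged into one kernel-verified Lean document; each statement's English description precedes it below -/
import Mathlib

section
/- For the scalar denoising problem with y > 0 and ground truth x_t, the upper-level loss Q(w) = (x*(w) − x_t)² is differentiable at every w ∈ ℝ except at w ∈ {−y, 0, y}. -/
/-!
Outside `[-y, y]` the loss is the constant `x_t²`, on `[0, y]` it is `(y - w - x_t)²` and on
`[-y, 0]` it is `(y + w - x_t)²`. So `Q` is smooth away from `{-y, 0, y}`, while at each of these
points the one-sided derivatives differ: they are `0` and `∓2 x_t` at `±y`, and `±2 (y - x_t)`
at `0`.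
-/

open Set Filter Topology

theorem not_differentiableAt_of_eventuallyEq_nhdsLE_nhdsGE {F : Type*} [NormedAddCommGroup F]
    [NormedSpace ℝ F] {f g h : ℝ → F} {a b : F} {w : ℝ} (hfg : f =ᶠ[𝓝[≤] w] g)
    (hfh : f =ᶠ[𝓝[≥] w] h) (hg : HasDerivAt g a w) (hh : HasDerivAt h b w) (hab : a ≠ b) :
    ¬ DifferentiableAt ℝ f w := by
  intro hf
  have hleft := (uniqueDiffWithinAt_Iic w).eq_deriv _ hf.hasDerivAt.hasDerivWithinAt
    (hg.hasDerivWithinAt.congr_of_eventuallyEq_of_mem hfg self_mem_Iic)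
  have hright := (uniqueDiffWithinAt_Ici w).eq_deriv _ hf.hasDerivAt.hasDerivWithinAt
    (hh.hasDerivWithinAt.congr_of_eventuallyEq_of_mem hfh self_mem_Ici)
  exact hab (hleft.symm.trans hright)

theorem hasDerivAt_sq_add_sub (c d w : ℝ) :
    HasDerivAt (fun z => (c + z - d) ^ 2) (2 * (c + w - d)) w := by
  simpa using (((hasDerivAt_id w).const_add c).sub_const d).fun_pow 2

theorem hasDerivAt_sq_sub_sub (c d w : ℝ) :
    HasDerivAt (fun z => (c - z - d) ^ 2) (-(2 * (c - w - d))) w := by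
  simpa using (((hasDerivAt_id w).const_sub c).sub_const d).fun_pow 2

noncomputable def denoisingLoss (y xt w : ℝ) : ℝ :=
  ((if |w| ≤ y then y - |w| else 0) - xt) ^ 2

section DenoisingLoss

variable {y xt w : ℝ}

theorem denoisingLoss_of_abs_le (h : |w| ≤ y) : denoisingLoss y xt w = (y - |w| - xt) ^ 2 := by
  rw [denoisingLoss, if_pos h]

theorem denoisingLoss_of_le_abs (h : y ≤ |w|) : denoisingLoss y xt w = xt ^ 2 := by
  rcases h.lt_or_eq with h | h
  · rw [denoisingLoss, if_neg h.not_ge, zero_sub, neg_sq]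
  · rw [denoisingLoss_of_abs_le h.ge, h, sub_self, zero_sub, neg_sq]

theorem denoisingLoss_of_mem_Icc_zero (h : w ∈ Icc 0 y) :
    denoisingLoss y xt w = (y - w - xt) ^ 2 := by
  rw [denoisingLoss_of_abs_le ((abs_of_nonneg h.1).le.trans h.2), abs_of_nonneg h.1]

theorem denoisingLoss_of_mem_Icc_neg (h : w ∈ Icc (-y) 0) :
    denoisingLoss y xt w = (y + w - xt) ^ 2 := by
  rw [denoisingLoss_of_abs_le (by rw [abs_of_nonpos h.2]; linarith [h.1]), abs_of_nonpos h.2,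
    sub_neg_eq_add]

theorem differentiableAt_denoisingLoss (h0 : w ≠ 0) (hy : |w| ≠ y) :
    DifferentiableAt ℝ (denoisingLoss y xt) w := by
  rcases hy.lt_or_gt with hlt | hgt
  · have hloc : denoisingLoss y xt =ᶠ[𝓝 w] fun z => (y - |z| - xt) ^ 2 :=
      (continuous_abs.continuousAt.eventually_lt continuousAt_const hlt).mono
        fun z hz => denoisingLoss_of_abs_le hz.le
    exact hloc.differentiableAt_iff.2
      ((((differentiableAt_const y).sub (differentiableAt_abs h0)).sub_const xt).pow 2)
  · have hloc : denoisingLoss y xt =ᶠ[𝓝 w] fun _ => xt ^ 2 :=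
      (continuousAt_const.eventually_lt continuous_abs.continuousAt hgt).mono
        fun z hz => denoisingLoss_of_le_abs hz.le
    exact hloc.differentiableAt_iff.2 (differentiableAt_const _)

theorem not_differentiableAt_denoisingLoss_neg (hy : 0 < y) (hxt : xt ≠ 0) :
    ¬ DifferentiableAt ℝ (denoisingLoss y xt) (-y) := by
  refine not_differentiableAt_of_eventuallyEq_nhdsLE_nhdsGE ?_ ?_ (hasDerivAt_const _ (xt ^ 2))
    (hasDerivAt_sq_add_sub y xt (-y)) (by simpa [eq_comm] using hxt)
  · filter_upwards [self_mem_nhdsWithin] with z (hz : z ≤ -y)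
    exact denoisingLoss_of_le_abs (by rw [abs_of_nonpos (by linarith)]; linarith)
  · filter_upwards [Icc_mem_nhdsGE (neg_neg_of_pos hy)] with z hz
    exact denoisingLoss_of_mem_Icc_neg hz

theorem not_differentiableAt_denoisingLoss_zero (hy : 0 < y) (hxt : xt ≠ y) :
    ¬ DifferentiableAt ℝ (denoisingLoss y xt) 0 := by
  refine not_differentiableAt_of_eventuallyEq_nhdsLE_nhdsGE ?_ ?_ (hasDerivAt_sq_add_sub y xt 0)
    (hasDerivAt_sq_sub_sub y xt 0) fun h => hxt (by linarith)
  · filter_upwards [Icc_mem_nhdsLE (neg_neg_of_pos hy)] with z hz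
    exact denoisingLoss_of_mem_Icc_neg hz
  · filter_upwards [Icc_mem_nhdsGE hy] with z hz
    exact denoisingLoss_of_mem_Icc_zero hz

theorem not_differentiableAt_denoisingLoss_pos (hy : 0 < y) (hxt : xt ≠ 0) :
    ¬ DifferentiableAt ℝ (denoisingLoss y xt) y := by
  refine not_differentiableAt_of_eventuallyEq_nhdsLE_nhdsGE ?_ ?_ (hasDerivAt_sq_sub_sub y xt y)
    (hasDerivAt_const _ (xt ^ 2)) (by simpa using hxt)
  · filter_upwards [Icc_mem_nhdsLE hy] with z hz
    exact denoisingLoss_of_mem_Icc_zero hz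
  · filter_upwards [self_mem_nhdsWithin] with z (hz : y ≤ z)
    exact denoisingLoss_of_le_abs (hz.trans (le_abs_self z))

end DenoisingLoss

/-- For the scalar denoising problem with `y > 0` and ground truth `x_t` (with
`x_t ≠ y`, `x_t ≠ 0`), the upper-level loss `Q(w) = (x*(w) − x_t)²` is differentiable
at every `w ∈ ℝ` except at `w ∈ {−y, 0, y}`. -/
theorem stmt_3 (y xt : ℝ) (hy : 0 < y) (hxt1 : xt ≠ y) (hxt2 : xt ≠ 0)
    (xstar : ℝ → ℝ) (hx : ∀ w, xstar w = if |w| ≤ y then y - |w| else 0)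
    (Q : ℝ → ℝ) (hQ : ∀ w, Q w = (xstar w - xt)^2) :
    (∀ w : ℝ, w ∉ ({-y, 0, y} : Set ℝ) → DifferentiableAt ℝ Q w) ∧
    (∀ w : ℝ, w ∈ ({-y, 0, y} : Set ℝ) → ¬ DifferentiableAt ℝ Q w) := by
  obtain rfl : Q = denoisingLoss y xt := funext fun w => by rw [hQ, hx, denoisingLoss]
  refine ⟨fun w hw => ?_, ?_⟩
  · simp only [mem_insert_iff, mem_singleton_iff, not_or] at hw
    exact differentiableAt_denoisingLoss hw.2.1 fun h => ((abs_eq hy.le).1 h).elim hw.2.2 hw.1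
  · rintro w (rfl | rfl | rfl)
    · exact not_differentiableAt_denoisingLoss_neg hy hxt2
    · exact not_differentiableAt_denoisingLoss_zero hy hxt1
    · exact not_differentiableAt_denoisingLoss_pos hy hxt2
end

section
/- Let x* be the unique minimizer of (1/2)‖x − y‖₂² + ‖Wx‖₁, let W₀ collect the rows wᵢ of W with wᵢᵀ x* = 0 and W± the rows with wᵢᵀ x* ≠ 0, with s = sign(W± x*). If W₀ has full row rank, then x* = (I − W₀ᵀ(W₀W₀ᵀ)⁻¹W₀)(y − W±ᵀ s). -/
/-!
Let `g = x* - y + W±ᵀ s`. Along a direction `d` with `W₀ d = 0`, no entry of `W x*` changes sign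
for small `t`, so the objective at `x* + t d` is the quadratic
`f(x*) + t ⟪g, d⟫ + t² ‖d‖² / 2`, and minimality forces `⟪g, d⟫ = 0`. Hence `g ⟂ ker W₀`, so the
projection `P = I - W₀ᵀ (W₀ W₀ᵀ)⁻¹ W₀` onto `ker W₀` kills `g` and fixes `x* ∈ ker W₀`, giving
`x* = P (x* - g) = P (y - W±ᵀ s)`.
-/

open Matrix Filter Topology

namespace Matrix

variable {K ι κ : Type*} [Field K] [Fintype ι] [Fintype κ] [DecidableEq ι] [DecidableEq κ]

theorem isUnit_det_of_rank_eq_card {A : Matrix κ κ K} (h : A.rank = Fintype.card κ) :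
    IsUnit A.det := by
  rw [← isUnit_iff_isUnit_det, ← mulVec_surjective_iff_isUnit]
  have hrange : LinearMap.range A.mulVecLin = ⊤ := by
    apply Submodule.eq_top_of_finrank_eq
    rw [← rank, h, Module.finrank_fintype_fun_eq_card]
  exact LinearMap.range_eq_top.mp hrange

/-- The orthogonal projection onto `ker A` when `A` has full row rank; otherwise `(A * Aᵀ)⁻¹` is the
junk value `0`. -/
noncomputable def kerProjection (A : Matrix κ ι K) : Matrix ι ι K := 1 - Aᵀ * (A * Aᵀ)⁻¹ * A

theorem mul_kerProjection {A : Matrix κ ι K} (hA : IsUnit (A * Aᵀ).det) :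
    A * A.kerProjection = 0 := by
  rw [kerProjection, Matrix.mul_sub, Matrix.mul_one, ← Matrix.mul_assoc, ← Matrix.mul_assoc,
    mul_nonsing_inv _ hA, Matrix.one_mul, sub_self]

theorem kerProjection_mulVec_of_mulVec_eq_zero {A : Matrix κ ι K} {v : ι → K}
    (hv : A *ᵥ v = 0) : A.kerProjection *ᵥ v = v := by
  rw [kerProjection, sub_mulVec, one_mulVec, ← mulVec_mulVec, hv, mulVec_zero, sub_zero]

theorem kerProjection_mulVec_eq_zero [LinearOrder K] [IsStrictOrderedRing K]
    {A : Matrix κ ι K} (hA : IsUnit (A * Aᵀ).det) {g : ι → K}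
    (hg : ∀ d, A *ᵥ d = 0 → g ⬝ᵥ d = 0) : A.kerProjection *ᵥ g = 0 := by
  set p := A.kerProjection *ᵥ g
  have hp : A *ᵥ p = 0 := by rw [mulVec_mulVec, mul_kerProjection hA, zero_mulVec]
  -- `p = g - Aᵀ w` with `g ⟂ p` and `Aᵀ w ⟂ p`
  have hsplit : p = g - Aᵀ *ᵥ ((A * Aᵀ)⁻¹ *ᵥ (A *ᵥ g)) := by
    simp only [p, kerProjection, sub_mulVec, one_mulVec, mulVec_mulVec, Matrix.mul_assoc]
  refine dotProduct_self_eq_zero.mp ?_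
  conv_lhs => arg 1; rw [hsplit]
  rw [sub_dotProduct, hg p hp, mulVec_transpose, ← dotProduct_mulVec, hp, dotProduct_zero,
    sub_zero]

end Matrix

theorem abs_add_eq_abs_add_sign_mul {a c : ℝ} (h : |c| ≤ |a|) :
    |a + c| = |a| + Real.sign a * c := by
  rcases lt_trichotomy a 0 with ha | rfl | ha
  · rw [abs_of_neg ha] at h ⊢
    rw [Real.sign_of_neg ha, abs_of_nonpos (by linarith [le_abs_self c])]
    ring
  · simp_all
  · rw [abs_of_pos ha] at h ⊢
    rw [Real.sign_of_pos ha, abs_of_nonneg (by linarith [neg_abs_le c])]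
    ring

section AnalysisLasso

variable {ι κ : Type*} [Fintype ι] [Fintype κ]

noncomputable def analysisLassoObjective (y : ι → ℝ) (W : Matrix κ ι ℝ) (x : ι → ℝ) : ℝ :=
  (1/2) * ∑ i, (x i - y i)^2 + ∑ j, |(W *ᵥ x) j|

theorem analysisLassoObjective_add_smul {y x d : ι → ℝ} {W : Matrix κ ι ℝ} {t : ℝ}
    (ht : ∀ j, |t * (W *ᵥ d) j| ≤ |(W *ᵥ x) j|) :
    analysisLassoObjective y W (x + t • d) = analysisLassoObjective y W x
      + t * ((x - y) ⬝ᵥ d + (fun j => Real.sign ((W *ᵥ x) j)) ⬝ᵥ (W *ᵥ d))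
      + t ^ 2 / 2 * (d ⬝ᵥ d) := by
  have habs : ∀ j, |(W *ᵥ (x + t • d)) j|
      = |(W *ᵥ x) j| + t * (Real.sign ((W *ᵥ x) j) * (W *ᵥ d) j) := fun j => by
    rw [mulVec_add, mulVec_smul, Pi.add_apply, Pi.smul_apply, smul_eq_mul,
      abs_add_eq_abs_add_sign_mul (ht j)]
    ring
  simp only [analysisLassoObjective, habs, dotProduct, Finset.sum_add_distrib, ← Finset.mul_sum,
    Pi.add_apply, Pi.smul_apply, Pi.sub_apply, smul_eq_mul]
  have hsq : ∑ i, (x i + t * d i - y i) ^ 2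
      = ∑ i, (x i - y i) ^ 2 + 2 * t * ∑ i, (x i - y i) * d i + t ^ 2 * ∑ i, d i * d i := by
    simp only [Finset.mul_sum, ← Finset.sum_add_distrib]
    exact Finset.sum_congr rfl fun i _ => by ring
  rw [hsq]
  ring

theorem analysisLassoObjective_stationary {y x d : ι → ℝ} {W : Matrix κ ι ℝ}
    (hmin : ∀ x', analysisLassoObjective y W x ≤ analysisLassoObjective y W x')
    (hd : ∀ j, (W *ᵥ x) j = 0 → (W *ᵥ d) j = 0) :
    (x - y) ⬝ᵥ d + (fun j => Real.sign ((W *ᵥ x) j)) ⬝ᵥ (W *ᵥ d) = 0 := by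
  set L := (x - y) ⬝ᵥ d + (fun j => Real.sign ((W *ᵥ x) j)) ⬝ᵥ (W *ᵥ d)
  -- near `t = 0` no nonzero entry of `W x` changes sign along `x + t d`
  have hsmall : ∀ᶠ t in 𝓝 (0 : ℝ), ∀ j, |t * (W *ᵥ d) j| ≤ |(W *ᵥ x) j| := by
    refine eventually_all.2 fun j => ?_
    by_cases hj : (W *ᵥ x) j = 0
    · simp [hd j hj]
    · have hlim : Tendsto (fun t : ℝ => |t * (W *ᵥ d) j|) (𝓝 0) (𝓝 0) := by
        exact (by fun_prop : Continuous fun t : ℝ => |t * (W *ᵥ d) j|).tendsto' 0 0 (by simp)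
      exact hlim.eventually (eventually_le_nhds (abs_pos.2 hj))
  have hloc : IsLocalMin (fun t : ℝ => t * L + t ^ 2 / 2 * (d ⬝ᵥ d)) 0 := by
    filter_upwards [hsmall] with t ht
    have := hmin (x + t • d)
    rw [analysisLassoObjective_add_smul ht] at this
    linarith
  have hderiv : HasDerivAt (fun t : ℝ => t * L + t ^ 2 / 2 * (d ⬝ᵥ d)) L 0 := by
    have h := ((hasDerivAt_id' (0 : ℝ)).mul_const L).add
      (((hasDerivAt_pow 2 (0 : ℝ)).div_const 2).mul_const (d ⬝ᵥ d))
    norm_num at h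
    exact h
  exact hloc.hasDerivAt_eq_zero hderiv

end AnalysisLasso

open Classical in
/-- Let `x*` be the unique minimizer of `(1/2)‖x − y‖₂² + ‖Wx‖₁`, let `W₀` collect
the rows `wᵢ` of `W` with `wᵢᵀ x* = 0` and `W±` the rows with `wᵢᵀ x* ≠ 0`, and let
`s = sign(W± x*)`. If `W₀` has full row rank, then
`x* = (I − W₀ᵀ(W₀W₀ᵀ)⁻¹W₀)(y − W±ᵀ s)`. -/
theorem stmt_10 (n k : ℕ) (y : Fin n → ℝ) (W : Matrix (Fin k) (Fin n) ℝ)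
    (xstar : Fin n → ℝ)
    (hmin : ∀ x : Fin n → ℝ,
      (1/2) * ∑ i, (xstar i - y i)^2 + ∑ j, |W.mulVec xstar j| ≤
      (1/2) * ∑ i, (x i - y i)^2 + ∑ j, |W.mulVec x j|)
    (W₀ : Matrix {j : Fin k // W.mulVec xstar j = 0} (Fin n) ℝ)
    (hW₀ : ∀ j i, W₀ j i = W j.1 i)
    (Wpm : Matrix {j : Fin k // W.mulVec xstar j ≠ 0} (Fin n) ℝ)
    (hWpm : ∀ j i, Wpm j i = W j.1 i)
    (s : {j : Fin k // W.mulVec xstar j ≠ 0} → ℝ)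
    (hs : ∀ j, s j = Real.sign (W.mulVec xstar j.1))
    (hrank : W₀.rank = Fintype.card {j : Fin k // W.mulVec xstar j = 0}) :
    xstar = (1 - W₀ᵀ * (W₀ * W₀ᵀ)⁻¹ * W₀).mulVec (y - Wpmᵀ.mulVec s) := by
  have hW₀v : ∀ v j, (W₀ *ᵥ v) j = (W *ᵥ v) j.1 := fun v j => by
    simp only [mulVec, dotProduct, hW₀]
  have hWpmv : ∀ v j, (Wpm *ᵥ v) j = (W *ᵥ v) j.1 := fun v j => by
    simp only [mulVec, dotProduct, hWpm]
  have hunit : IsUnit (W₀ * W₀ᵀ).det :=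
    isUnit_det_of_rank_eq_card (by rw [rank_self_mul_transpose, hrank])
  -- `sign 0 = 0`, so the linearised ℓ₁ term only sees the rows of `W±`
  have hsign : ∀ d, (fun j => Real.sign ((W *ᵥ xstar) j)) ⬝ᵥ (W *ᵥ d) = (Wpmᵀ *ᵥ s) ⬝ᵥ d :=
      fun d => by
    rw [mulVec_transpose, ← dotProduct_mulVec, dotProduct, dotProduct,
      ← Fintype.sum_subtype_add_sum_subtype fun j => (W *ᵥ xstar) j ≠ 0]
    have hzero : ∑ j : {j // ¬(W *ᵥ xstar) j ≠ 0}, Real.sign ((W *ᵥ xstar) j) * (W *ᵥ d) j = 0 :=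
      Finset.sum_eq_zero fun j _ => by rw [not_not.mp j.2, Real.sign_zero, zero_mul]
    simp only [hzero, add_zero, hs, hWpmv]
  set g := xstar - y + Wpmᵀ *ᵥ s
  have hg : ∀ d, W₀ *ᵥ d = 0 → g ⬝ᵥ d = 0 := fun d hd => by
    rw [add_dotProduct, ← hsign]
    refine analysisLassoObjective_stationary hmin fun j hj => ?_
    rw [← hW₀v d ⟨j, hj⟩, hd, Pi.zero_apply]
  have hx : W₀ *ᵥ xstar = 0 := funext fun j => (hW₀v xstar j).trans j.2
  calc xstar = W₀.kerProjection *ᵥ xstar := (kerProjection_mulVec_of_mulVec_eq_zero hx).symm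
    _ = W₀.kerProjection *ᵥ (xstar - g) := by
        rw [mulVec_sub, kerProjection_mulVec_eq_zero hunit hg, sub_zero]
    _ = _ := by
        congr 1
        simp only [g]
        abel
end

section
/- Let W₀(t) be a differentiable full-row-rank matrix path and P(t) = I − W₀(t)⁺ W₀(t) the projector onto its null space. Then for a fixed vector q, the derivative of x(t) = P(t) q satisfies x′ = −(W₀⁺ W₀′ P + (W₀⁺ W₀′ P)ᵀ) q. -/
/-!
With `G = W Wᵀ` and `P = 1 - Wᵀ G⁻¹ W`, the product rule together with
`(G⁻¹)' = -G⁻¹ G' G⁻¹` expresses `P'` as four terms in `W`, `W'` and `G⁻¹`. Because `G⁻¹` is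
symmetric, these regroup as `-(W⁺ W' P + (W⁺ W' P)ᵀ)`; applying this to the constant `q`
gives `x'`.
-/

open Matrix

-- Any matrix norm would do; this one makes square matrices a normed algebra, as
-- `hasFDerivAt_ringInverse` requires.
open scoped Matrix.Norms.Operator

section MatrixCalculus

variable {l m n : Type*} [Fintype l] [Fintype m] [Fintype n] {t : ℝ}

theorem hasDerivAt_matrix_iff {A : ℝ → Matrix m n ℝ} {A' : Matrix m n ℝ} :
    HasDerivAt A A' t ↔ ∀ i j, HasDerivAt (fun u => A u i j) (A' i j) t := by
  let e : (m → n → ℝ) ≃L[ℝ] Matrix m n ℝ := (ofLinearEquiv ℝ).toContinuousLinearEquiv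
  constructor
  · intro h i j
    exact hasDerivAt_pi.1 (hasDerivAt_pi.1 (e.symm.hasFDerivAt.comp_hasDerivAt t h) i) j
  · intro h
    exact e.hasFDerivAt.comp_hasDerivAt t (hasDerivAt_pi.2 fun i => hasDerivAt_pi.2 (h i))

theorem HasDerivAt.matrix_transpose {A : ℝ → Matrix m n ℝ} {A' : Matrix m n ℝ}
    (h : HasDerivAt A A' t) : HasDerivAt (fun u => (A u)ᵀ) A'ᵀ t :=
  hasDerivAt_matrix_iff.2 fun i j => hasDerivAt_matrix_iff.1 h j i

theorem HasDerivAt.matrix_mul {A : ℝ → Matrix l m ℝ} {B : ℝ → Matrix m n ℝ}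
    {A' : Matrix l m ℝ} {B' : Matrix m n ℝ} (hA : HasDerivAt A A' t) (hB : HasDerivAt B B' t) :
    HasDerivAt (fun u => A u * B u) (A' * B t + A t * B') t := by
  refine hasDerivAt_matrix_iff.2 fun i j => ?_
  simp only [mul_apply, Matrix.add_apply, ← Finset.sum_add_distrib]
  exact HasDerivAt.fun_sum fun k _ =>
    (hasDerivAt_matrix_iff.1 hA i k).fun_mul (hasDerivAt_matrix_iff.1 hB k j)

theorem HasDerivAt.matrix_mulVec_const {A : ℝ → Matrix m n ℝ} {A' : Matrix m n ℝ}
    (h : HasDerivAt A A' t) (q : n → ℝ) : HasDerivAt (fun u => A u *ᵥ q) (A' *ᵥ q) t :=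
  hasDerivAt_pi.2 fun i => by
    simpa only [mulVec, dotProduct] using
      HasDerivAt.fun_sum fun j _ => (hasDerivAt_matrix_iff.1 h i j).mul_const (q j)

theorem HasDerivAt.matrix_inv [DecidableEq n] {G : ℝ → Matrix n n ℝ} {G' : Matrix n n ℝ}
    (hG : HasDerivAt G G' t) (hu : IsUnit (G t)) :
    HasDerivAt (fun u => (G u)⁻¹) (-((G t)⁻¹ * G' * (G t)⁻¹)) t := by
  obtain ⟨u, hu⟩ := hu
  have := (hu ▸ hasFDerivAt_ringInverse (𝕜 := ℝ) u).comp_hasDerivAt t hG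
  rw [show (fun u => (G u)⁻¹) = Ring.inverse ∘ G from
    funext fun _ => nonsing_inv_eq_ringInverse _]
  refine this.congr_deriv ?_
  simp [← hu, ← coe_units_inv]

end MatrixCalculus

namespace Matrix

theorem isUnit_mul_transpose_of_rank_eq {m n R : Type*} [Fintype m] [Fintype n] [DecidableEq m]
    [Field R] [LinearOrder R] [IsStrictOrderedRing R] {W : Matrix m n R}
    (h : W.rank = Fintype.card m) : IsUnit (W * Wᵀ) := by
  rw [← mulVec_surjective_iff_isUnit]
  refine LinearMap.range_eq_top.1
    (Submodule.eq_top_of_finrank_eq (S := LinearMap.range (W * Wᵀ).mulVecLin) ?_)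
  rw [← rank, rank_self_mul_transpose, h, Module.finrank_fintype_fun_eq_card]

variable {m n R : Type*} [Fintype m] [Fintype n] [DecidableEq m] [DecidableEq n] [CommRing R]

/-- For `W` of full row rank this is the Moore–Penrose pseudoinverse `W⁺`, and `nullProj W` is the
orthogonal projector onto `ker W`; otherwise `(W * Wᵀ)⁻¹` takes Mathlib's junk value `0`. -/
noncomputable def rightPinv (W : Matrix m n R) : Matrix n m R := Wᵀ * (W * Wᵀ)⁻¹

noncomputable def nullProj (W : Matrix m n R) : Matrix n n R := 1 - W.rightPinv * W

-- The right-hand side is the product-rule derivative of `Wᵀ (W Wᵀ)⁻¹ W` in the direction `W'`.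
theorem rightPinv_mul_mul_nullProj_add_transpose (W W' : Matrix m n R) :
    W.rightPinv * W' * W.nullProj + (W.rightPinv * W' * W.nullProj)ᵀ =
      (W'ᵀ * (W * Wᵀ)⁻¹ + Wᵀ * -((W * Wᵀ)⁻¹ * (W' * Wᵀ + W * W'ᵀ) * (W * Wᵀ)⁻¹)) * W
        + Wᵀ * (W * Wᵀ)⁻¹ * W' := by
  have hS : (W * Wᵀ)⁻¹ᵀ = (W * Wᵀ)⁻¹ := by
    rw [transpose_nonsing_inv, transpose_mul, transpose_transpose]
  simp only [rightPinv, nullProj]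
  generalize (W * Wᵀ)⁻¹ = S at hS ⊢
  simp only [transpose_mul, transpose_sub, transpose_transpose, hS, Matrix.mul_add,
    Matrix.add_mul, Matrix.mul_sub, Matrix.mul_neg, Matrix.neg_mul, Matrix.mul_one,
    Matrix.mul_assoc]
  abel

end Matrix

theorem hasDerivAt_nullProj {m n : Type*} [Fintype m] [Fintype n] [DecidableEq m]
    [DecidableEq n] {W : ℝ → Matrix m n ℝ} {W' : Matrix m n ℝ} {t : ℝ} (hW : HasDerivAt W W' t)
    (hunit : IsUnit (W t * (W t)ᵀ)) :
    HasDerivAt (fun u => (W u).nullProj)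
      (-((W t).rightPinv * W' * (W t).nullProj + ((W t).rightPinv * W' * (W t).nullProj)ᵀ))
      t := by
  have hGinv := (hW.matrix_mul hW.matrix_transpose).matrix_inv hunit
  have := (hasDerivAt_const t (1 : Matrix n n ℝ)).sub
    ((hW.matrix_transpose.matrix_mul hGinv).matrix_mul hW)
  rw [rightPinv_mul_mul_nullProj_add_transpose, ← zero_sub]
  exact this

/-- Differentiation of a null-space projection (Golub–Pereyra): if `W₀(t)` is a
differentiable full-row-rank matrix path, `W₀⁺ = W₀ᵀ(W₀W₀ᵀ)⁻¹`,
`P(t) = I − W₀(t)⁺ W₀(t)`, and `q` is a fixed vector, then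
`x(t) = P(t) q` satisfies `x′ = −(W₀⁺ W₀′ P + (W₀⁺ W₀′ P)ᵀ) q`. -/
theorem stmt_11 (n k₀ : ℕ) (q : Fin n → ℝ)
    (W₀ : ℝ → Matrix (Fin k₀) (Fin n) ℝ) (W₀' : ℝ → Matrix (Fin k₀) (Fin n) ℝ)
    (hrank : ∀ t, (W₀ t).rank = k₀)
    (hderiv : ∀ t i j, HasDerivAt (fun u => W₀ u i j) (W₀' t i j) t)
    (pinv : ℝ → Matrix (Fin n) (Fin k₀) ℝ)
    (hpinv : ∀ t, pinv t = (W₀ t)ᵀ * (W₀ t * (W₀ t)ᵀ)⁻¹)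
    (P : ℝ → Matrix (Fin n) (Fin n) ℝ)
    (hP : ∀ t, P t = 1 - pinv t * W₀ t)
    (x : ℝ → Fin n → ℝ) (hx : ∀ t, x t = (P t).mulVec q) :
    ∀ t i, HasDerivAt (fun u => x u i)
      ((-(pinv t * W₀' t * P t + (pinv t * W₀' t * P t)ᵀ)).mulVec q i) t := by
  obtain rfl : pinv = fun u => (W₀ u).rightPinv := funext hpinv
  obtain rfl : P = fun u => (W₀ u).nullProj := funext hP
  obtain rfl : x = fun u => (W₀ u).nullProj *ᵥ q := funext hx
  intro t i
  have hunit := isUnit_mul_transpose_of_rank_eq ((hrank t).trans (Fintype.card_fin k₀).symm)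
  exact hasDerivAt_pi.1
    ((hasDerivAt_nullProj (hasDerivAt_matrix_iff.2 (hderiv t)) hunit).matrix_mulVec_const q) i
end
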